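/- Fix an integer m with 2 ≤ m ≤ 8, let p ∈ (0,1) be the unique root of (1-x)^4 = (m-1)^4 x^3, and set ρ = (1/2)·log₂(1/p). Let S = Fin m, let Q = Bool × Fin m with elements written (q_d, q_s), and define: the Ising channel law P(y|x,s) = 1 if x = s = y, P(y|x,s) = 1/2 if x ≠ s and y ∈ {x,s}, and P(y|x,s) = 0 otherwise; the Q-graph transition φ((q_d,q_s), y) = (0, y) if q_d = 1 and y = q_s, and φ((q_d,q_s), y) = (1, y) otherwise; the test distribution T(y|(1,q_s)) = (1+p)/2 if y = q_s and (1-p)/(2(m-1)) otherwise, and T(y|(0,q_s)) = 2p/(1+p) if y = q_s and (1-p)/((1+p)(m-1)) otherwise; and the value function V(s,(1,q_s)) = ρ if q_s = s, V(s,(1,q_s)) = 1 + 1.5ρ if q_s ≠ s, V(s,(0,q_s)) = 2ρ - 1 + log₂(1+p) if q_s = s, and V(s,(0,q_s)) = 1.5ρ + log₂(1+p) if q_s ≠ s. Then for every s ∈ S and q ∈ Q the Bellman equation holds: ρ + V(s,q) = max over x ∈ S of [ Σ_y P(y|x,s)·log₂(P(y|x,s)/T(y|q)) + Σ_y P(y|x,s)·V(x,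 φ(q,y)) ], where all sums range over y ∈ Fin m with the convention 0·log₂(0/t) = 0. -/

import Mathlib

/-!
Since `P(·|x,s)` is the average of the point masses at `x` and `s`, every sum over `y`
collapses to its terms at `y = x` and `y = s`. The root equation gives
`log₂((1-p)/(m-1)) = (3/4)·log₂ p = -(3/2)·ρ`, so every `log₂ T(y|q)` is affine in `ρ` and
`log₂(1+p)`, and each Bellman inequality becomes a linear inequality in these two numbers,
tight at `x = s`. The only one that is not automatic is `q = (1,q_s)` with `q_s ≠ s` and
`x ∉ {s, q_s}`: it reads `ρ ≤ 2`, i.e. `p ≥ 1/16`, which is where `m ≤ 8` enters.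
-/

/-- The Ising channel law `P(y|x,s)`: equal to `1` if `x = s = y`, to `1/2` if
`x ≠ s` and `y ∈ {x, s}`, and to `0` otherwise. -/
noncomputable def IsingP {m : ℕ} (y x s : Fin m) : ℝ :=
  if x = s then (if y = s then 1 else 0)
  else if y = x ∨ y = s then 1 / 2 else 0

/-- The Q-graph transition: `φ((q_d, q_s), y) = (0, y)` if `q_d = 1` and `y = q_s`,
and `φ((q_d, q_s), y) = (1, y)` otherwise (here `q_d = 1` is `q_d = true`). -/
def qGraph {m : ℕ} (q : Bool × Fin m) (y : Fin m) : Bool × Fin m :=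
  if q.1 = true ∧ y = q.2 then (false, y) else (true, y)

/-- The test distribution `T(y|q)` of the Q-graph for `|X| ≤ 8`:
`T(y|(1,q_s)) = (1+p)/2` if `y = q_s` and `(1-p)/(2(m-1))` otherwise;
`T(y|(0,q_s)) = 2p/(1+p)` if `y = q_s` and `(1-p)/((1+p)(m-1))` otherwise. -/
noncomputable def testT (p : ℝ) {m : ℕ} (y : Fin m) (q : Bool × Fin m) : ℝ :=
  if q.1 then (if y = q.2 then (1 + p) / 2 else (1 - p) / (2 * ((m : ℝ) - 1)))
  else (if y = q.2 then 2 * p / (1 + p) else (1 - p) / ((1 + p) * ((m : ℝ) - 1)))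

/-- The value function of Lemma 1: `V(s,(1,q_s)) = ρ` if `q_s = s`, `1 + 1.5ρ` if
`q_s ≠ s`; `V(s,(0,q_s)) = 2ρ - 1 + log₂(1+p)` if `q_s = s`, `1.5ρ + log₂(1+p)`
if `q_s ≠ s`. -/
noncomputable def valueV (ρ p : ℝ) {m : ℕ} (s : Fin m) (q : Bool × Fin m) : ℝ :=
  if q.1 then (if q.2 = s then ρ else 1 + 1.5 * ρ)
  else (if q.2 = s then 2 * ρ - 1 + Real.logb 2 (1 + p)
        else 1.5 * ρ + Real.logb 2 (1 + p))


open Real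

lemma IsingP_eq_average {m : ℕ} (y x s : Fin m) :
    IsingP y x s = ((if y = x then 1 else 0) + (if y = s then 1 else 0)) / 2 := by
  unfold IsingP
  split_ifs <;> simp_all

lemma sum_IsingP_mul {m : ℕ} (x s : Fin m) (g : Fin m → ℝ) :
    ∑ y, IsingP y x s * g y = (g x + g s) / 2 := by
  simp only [IsingP_eq_average, add_mul, div_mul_eq_mul_div, ← Finset.sum_div,
    Finset.sum_add_distrib, ite_mul, one_mul, zero_mul, Finset.sum_ite_eq', Finset.mem_univ,
    if_true]

lemma IsingP_output_eq_input {m : ℕ} (x s : Fin m) :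
    IsingP x x s = if x = s then 1 else 1 / 2 := by
  by_cases h : x = s <;> simp [IsingP, h]

lemma IsingP_output_eq_state {m : ℕ} (x s : Fin m) :
    IsingP s x s = if x = s then 1 else 1 / 2 := by
  simp [IsingP]

noncomputable def bellmanObjective (ρ p : ℝ) {m : ℕ} (s : Fin m) (q : Bool × Fin m)
    (x : Fin m) : ℝ :=
  (∑ y : Fin m, IsingP y x s * logb 2 (IsingP y x s / testT p y q)) +
    ∑ y : Fin m, IsingP y x s * valueV ρ p x (qGraph q y)

lemma bellmanObjective_eq {ρ p : ℝ} {m : ℕ} {q : Bool × Fin m} (hT : ∀ y, testT p y q ≠ 0)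
    (s x : Fin m) :
    bellmanObjective ρ p s q x =
      (if x = s then 0 else -1) - (logb 2 (testT p x q) + logb 2 (testT p s q)) / 2 +
        (valueV ρ p x (qGraph q x) + valueV ρ p x (qGraph q s)) / 2 := by
  rw [bellmanObjective, sum_IsingP_mul, sum_IsingP_mul, IsingP_output_eq_input,
    IsingP_output_eq_state, logb_div (by split_ifs <;> norm_num) (hT x),
    logb_div (by split_ifs <;> norm_num) (hT s)]
  split_ifs <;> simp only [logb_one, one_div, logb_inv, logb_self_eq_one one_lt_two] <;> ring

lemma logb_div_of_root {p c : ℝ} (hc : c ≠ 0) (hroot : (1 - p) ^ 4 = c ^ 4 * p ^ 3) :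
    logb 2 ((1 - p) / c) = 3 / 4 * logb 2 p := by
  have h : ((1 - p) / c) ^ 4 = p ^ 3 := by rw [div_pow, hroot]; field_simp
  have := congrArg (logb 2) h
  rw [logb_pow, logb_pow] at this
  push_cast at this
  linarith

lemma one_div_sixteen_le_of_root {p c : ℝ} (hp : p ∈ Set.Ioo (0 : ℝ) 1) (hc0 : 0 ≤ c)
    (hc7 : c ≤ 7) (hroot : (1 - p) ^ 4 = c ^ 4 * p ^ 3) : 1 / 16 ≤ p := by
  obtain ⟨hp0, hp1⟩ := hp
  by_contra! hlt
  have hc4 : c ^ 4 ≤ 7 ^ 4 := pow_le_pow_left₀ hc0 hc7 4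
  have hp3 : p ^ 3 < (1 / 16) ^ 3 := pow_lt_pow_left₀ hlt hp0.le (by norm_num)
  have h1p : (15 / 16) ^ 4 < (1 - p) ^ 4 :=
    pow_lt_pow_left₀ (by linarith) (by norm_num) (by norm_num)
  nlinarith [pow_pos hp0 3]

lemma logb_testT {m : ℕ} {p ρ : ℝ} (hp : p ∈ Set.Ioo (0 : ℝ) 1) (hm : 1 < (m : ℝ))
    (hroot : (1 - p) ^ 4 = ((m : ℝ) - 1) ^ 4 * p ^ 3) (hρ : logb 2 p = -2 * ρ)
    (y : Fin m) (q : Bool × Fin m) :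
    logb 2 (testT p y q) =
      if q.1 then (if y = q.2 then logb 2 (1 + p) - 1 else -1 - 3 / 2 * ρ)
      else (if y = q.2 then 1 - 2 * ρ - logb 2 (1 + p) else -3 / 2 * ρ - logb 2 (1 + p)) := by
  obtain ⟨hp0, hp1⟩ := hp
  have hr := logb_div_of_root (sub_pos.2 hm).ne' hroot
  have hr0 : (1 - p) / ((m : ℝ) - 1) ≠ 0 := (div_pos (by linarith) (by linarith)).ne'
  have h1p : (1 + p) ≠ 0 := by linarith
  obtain ⟨_ | _, qs⟩ := q <;> by_cases hy : y = qs <;>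
    simp only [testT, hy, if_true, if_false, Bool.false_eq_true]
  · rw [logb_div (by positivity) h1p, logb_mul two_ne_zero hp0.ne',
      logb_self_eq_one one_lt_two]
    linarith
  · rw [mul_comm, ← div_div, logb_div hr0 h1p, hr]
    linarith
  · rw [logb_div h1p two_ne_zero, logb_self_eq_one one_lt_two]
  · rw [mul_comm, ← div_div, logb_div hr0 two_ne_zero, hr, logb_self_eq_one one_lt_two]
    linarith

lemma testT_pos {m : ℕ} {p : ℝ} (hp : p ∈ Set.Ioo (0 : ℝ) 1) (hm : 1 < (m : ℝ))
    (y : Fin m) (q : Bool × Fin m) : 0 < testT p y q := by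
  obtain ⟨hp0, hp1⟩ := hp
  have : 0 < (m : ℝ) - 1 := sub_pos.2 hm
  have : 0 < 1 - p := sub_pos.2 hp1
  unfold testT
  split_ifs <;> positivity

section
variable {m : ℕ} {p ρ : ℝ} (hp : p ∈ Set.Ioo (0 : ℝ) 1) (hm : 1 < (m : ℝ))
    (hroot : (1 - p) ^ 4 = ((m : ℝ) - 1) ^ 4 * p ^ 3) (hρ : logb 2 p = -2 * ρ)
include hp hm hroot hρ

lemma bellmanObjective_self (s : Fin m) (q : Bool × Fin m) :
    bellmanObjective ρ p s q s = ρ + valueV ρ p s q := by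
  rw [bellmanObjective_eq (fun y => (testT_pos hp hm y q).ne'), logb_testT hp hm hroot hρ]
  obtain ⟨_ | _, qs⟩ := q <;> rcases eq_or_ne qs s with rfl | hs <;>
    simp only [valueV, qGraph, *, Ne.symm, ne_eq, not_false_eq_true, ↓reduceIte,
      Bool.false_eq_true, and_self, and_true, and_false] <;> ring

lemma bellmanObjective_le_of_ne (hρ2 : ρ ≤ 2) {s x : Fin m} (hxs : x ≠ s)
    (q : Bool × Fin m) :
    bellmanObjective ρ p s q x ≤ ρ + valueV ρ p s q := by
  rw [bellmanObjective_eq (fun y => (testT_pos hp hm y q).ne'), logb_testT hp hm hroot hρ,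
    logb_testT hp hm hroot hρ]
  obtain ⟨_ | _, qs⟩ := q <;> rcases eq_or_ne qs x with rfl | hx <;>
    rcases eq_or_ne qs s with rfl | hs
  all_goals
    simp only [valueV, qGraph, *, Ne.symm, ne_eq, not_false_eq_true, ↓reduceIte,
      Bool.false_eq_true, and_self, and_true, and_false]
    linarith

end

theorem ising_bellman_le_eight_general (m : ℕ) (hm2 : 2 ≤ m) (hm8 : m ≤ 8) (p : ℝ)
    (hp : p ∈ Set.Ioo (0 : ℝ) 1)
    (hroot : (1 - p) ^ 4 = ((m : ℝ) - 1) ^ 4 * p ^ 3) :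
    ∀ (s : Fin m) (q : Bool × Fin m),
      IsGreatest
        (Set.range fun x : Fin m =>
          (∑ y : Fin m, IsingP y x s * Real.logb 2 (IsingP y x s / testT p y q)) +
          ∑ y : Fin m, IsingP y x s * valueV (1 / 2 * Real.logb 2 (1 / p)) p x (qGraph q y))
        (1 / 2 * Real.logb 2 (1 / p) + valueV (1 / 2 * Real.logb 2 (1 / p)) p s q) := by
  have hm : 1 < (m : ℝ) := by exact_mod_cast hm2
  have hm8' : (m : ℝ) ≤ 8 := by exact_mod_cast hm8
  set ρ := 1 / 2 * logb 2 (1 / p)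
  have hρ : logb 2 p = -2 * ρ := by simp only [ρ, one_div, logb_inv]; ring
  have hρ2 : ρ ≤ 2 := by
    have h16 := one_div_sixteen_le_of_root hp (sub_nonneg.2 hm.le) (by linarith) hroot
    have h := logb_le_logb_of_le one_lt_two (by norm_num) h16
    rw [one_div, logb_inv, show (16 : ℝ) = 2 ^ (4 : ℕ) by norm_num, logb_pow,
      logb_self_eq_one one_lt_two] at h
    norm_num at h
    linarith
  intro s q
  refine ⟨⟨s, bellmanObjective_self hp hm hroot hρ s q⟩, ?_⟩
  rintro _ ⟨x, rfl⟩
  rcases eq_or_ne x s with rfl | hxs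
  · exact (bellmanObjective_self hp hm hroot hρ x q).le
  · exact bellmanObjective_le_of_ne hp hm hroot hρ hρ2 hxs q

/-- Lemma 1 of the paper: for `2 ≤ m ≤ 8`, `p ∈ (0,1)` the unique root
of `(1-x)^4 = (m-1)^4 x^3`, and `ρ = (1/2)log₂(1/p)`, the Bellman equation
`ρ + V(s,q) = max_x [ Σ_y P(y|x,s)log₂(P(y|x,s)/T(y|q)) + Σ_y P(y|x,s)V(x,φ(q,y)) ]`
holds for every `s` and `q` (with the convention `0·log₂(0/t) = 0`, automatic since
`Real.log 0 = 0`). The "max" is expressed via `IsGreatest` over the range of the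
bracketed expression. -/
theorem ising_bellman_le_eight (m : ℕ) (hm2 : 2 ≤ m) (hm8 : m ≤ 8) (p : ℝ)
    (hp : p ∈ Set.Ioo (0 : ℝ) 1)
    (hroot : (1 - p) ^ 4 = ((m : ℝ) - 1) ^ 4 * p ^ 3)
    (huniq : ∀ q ∈ Set.Ioo (0 : ℝ) 1,
      (1 - q) ^ 4 = ((m : ℝ) - 1) ^ 4 * q ^ 3 → q = p) :
    ∀ (s : Fin m) (q : Bool × Fin m),
      IsGreatest
        (Set.range fun x : Fin m =>
          (∑ y : Fin m, IsingP y x s * Real.logb 2 (IsingP y x s / testT p y q)) +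
          ∑ y : Fin m, IsingP y x s * valueV (1 / 2 * Real.logb 2 (1 / p)) p x (qGraph q y))
        (1 / 2 * Real.logb 2 (1 / p) + valueV (1 / 2 * Real.logb 2 (1 / p)) p s q) :=
  ising_bellman_le_eight_general m hm2 hm8 p hp hroot
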